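/- Let σ be continuous and positive, S_* continuous with G(S_*) < ∞, f_* the invariant density of S_*, F measurable with ∫_ℝ |F| f_* < ∞, and ϑ_* = ∫_ℝ F f_*. Let ψ be continuous with compact support and set S_ε = S_* + ε ψ σ². Then for all ε in a neighborhood of 0 one has G(S_ε) < ∞ and ∫|F| f_{S_ε} < ∞, and the map ε ↦ ϑ_{S_ε} := ∫_ℝ F f_{S_ε} is differentiable at ε = 0 with derivative 2( ∫_ℝ F(x)(∫_0^x ψ(v) dv) f_*(x) dx − ϑ_* ∫_ℝ (∫_0^x ψ(v) dv) f_*(x) dx ). -/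

import Mathlib

open MeasureTheory Real Set Filter intervalIntegral

noncomputable section

/-- The (unnormalized) invariant density `σ(y)⁻² exp(2 ∫_0^y S/σ²)` of the diffusion with
drift `S` and diffusion coefficient `σ`. -/
def invDensKernel (σ S : ℝ → ℝ) (y : ℝ) : ℝ :=
  ((σ y) ^ 2)⁻¹ * Real.exp (2 * ∫ v in (0:ℝ)..y, S v / (σ v) ^ 2)

/-- The normalized invariant density `f_S = G(S)⁻¹ σ⁻² exp(2 ∫_0^y S/σ²)`. -/
def invDens (σ S : ℝ → ℝ) (y : ℝ) : ℝ :=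
  (∫ z : ℝ, invDensKernel σ S z)⁻¹ * invDensKernel σ S y

/-! Since `(S_* + ε ψ σ²) / σ² = S_* / σ² + ε ψ`, the kernel of `S_ε` is the kernel of `S_*`
multiplied by `exp (2 ε Ψ)`, `Ψ x = ∫₀ˣ ψ`, and `Ψ` is bounded by `∫ |ψ|`. So `ϑ_{S_ε}` is the
mean of `F` under the exponential tilt `exp (2 ε Ψ) f_* / ∫ exp (2 ε Ψ) f_*`. Numerator and
denominator can be differentiated under the integral sign, the tilt being uniformly bounded for
bounded `ε`, and the quotient rule at `ε = 0`, where the denominator is `1`, gives the covariance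
of `F` and `2 Ψ` under `f_*`. -/

section ExponentialTilt

variable {α : Type*} [MeasurableSpace α] {μ : Measure α} {g h F f : α → ℝ} {C : ℝ}

lemma norm_exp_mul_le {t y : ℝ} (hy : |y| ≤ C) : ‖exp (t * y)‖ ≤ exp (|t| * C) := by
  rw [Real.norm_of_nonneg (exp_pos _).le, exp_le_exp]
  calc t * y ≤ |t * y| := le_abs_self _
    _ = |t| * |y| := abs_mul t y
    _ ≤ |t| * C := mul_le_mul_of_nonneg_left hy (abs_nonneg t)

lemma MeasureTheory.Integrable.exp_mul_mul (hh : Integrable h μ) (hg : AEStronglyMeasurable g μ)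
    (hgC : ∀ᵐ x ∂μ, |g x| ≤ C) (t : ℝ) :
    Integrable (fun x => exp (t * g x) * h x) μ :=
  hh.bdd_mul (hg.aemeasurable.const_mul t).exp.aestronglyMeasurable
    (hgC.mono fun _ hx => norm_exp_mul_le hx)

lemma hasDerivAt_integral_exp_mul_mul (hh : Integrable h μ) (hg : AEStronglyMeasurable g μ)
    (hgC : ∀ᵐ x ∂μ, |g x| ≤ C) (t₀ : ℝ) :
    HasDerivAt (fun t => ∫ x, exp (t * g x) * h x ∂μ)
      (∫ x, g x * (exp (t₀ * g x) * h x) ∂μ) t₀ := by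
  have hderiv : ∀ x t, HasDerivAt (fun t => exp (t * g x) * h x)
      (g x * (exp (t * g x) * h x)) t := fun x t => by
    simpa [mul_comm, mul_left_comm, mul_assoc] using
      (((hasDerivAt_id t).mul_const (g x)).exp.mul_const (h x))
  have hbound : ∀ᵐ x ∂μ, ∀ t ∈ Metric.ball t₀ 1,
      ‖g x * (exp (t * g x) * h x)‖ ≤ C * exp ((|t₀| + 1) * C) * ‖h x‖ := by
    filter_upwards [hgC] with x hx t ht
    have hC : 0 ≤ C := (abs_nonneg _).trans hx
    have ht' : |t| ≤ |t₀| + 1 := by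
      have := abs_sub_abs_le_abs_sub t t₀
      rw [Metric.mem_ball, Real.dist_eq] at ht
      linarith
    rw [norm_mul, norm_mul, Real.norm_eq_abs, mul_assoc]
    gcongr
    exact (norm_exp_mul_le hx).trans (exp_le_exp.2 (mul_le_mul_of_nonneg_right ht' hC))
  have hmeas : ∀ t, AEStronglyMeasurable (fun x => exp (t * g x) * h x) μ := fun t =>
    (hg.aemeasurable.const_mul t).exp.aestronglyMeasurable.mul hh.1
  exact (hasDerivAt_integral_of_dominated_loc_of_deriv_le (Metric.ball_mem_nhds t₀ one_pos)
    (Eventually.of_forall hmeas) (hh.exp_mul_mul hg hgC t₀) (hg.mul (hmeas t₀)) hbound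
    (hh.norm.const_mul _) (ae_of_all _ fun x t _ => hderiv x t)).2

lemma hasDerivAt_tilted_mean (hf : Integrable f μ) (hf1 : ∫ x, f x ∂μ = 1)
    (hFf : Integrable (fun x => F x * f x) μ) (hg : AEStronglyMeasurable g μ)
    (hgC : ∀ᵐ x ∂μ, |g x| ≤ C) :
    HasDerivAt (fun t => (∫ x, exp (t * g x) * (F x * f x) ∂μ) / ∫ x, exp (t * g x) * f x ∂μ)
      ((∫ x, g x * (F x * f x) ∂μ) - (∫ x, F x * f x ∂μ) * ∫ x, g x * f x ∂μ) 0 := by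
  have hN := hasDerivAt_integral_exp_mul_mul hFf hg hgC 0
  have hD := hasDerivAt_integral_exp_mul_mul hf hg hgC 0
  refine (hN.div hD (by simp [hf1])).congr_deriv ?_
  simp [hf1]

end ExponentialTilt

section InvariantDensity

variable {σ S : ℝ → ℝ}

lemma abs_intervalIntegral_le_integral_abs {ψ : ℝ → ℝ} (hψ : Integrable ψ) (a b : ℝ) :
    |∫ v in a..b, ψ v| ≤ ∫ v, |ψ v| :=
  norm_integral_le_integral_norm_uIoc.trans
    (setIntegral_le_integral hψ.norm (ae_of_all _ fun _ => norm_nonneg _))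

lemma invDensKernel_pos {y : ℝ} (hσ : σ y ≠ 0) : 0 < invDensKernel σ S y :=
  mul_pos (inv_pos.2 (sq_pos_of_ne_zero hσ)) (exp_pos _)

lemma integral_invDensKernel_pos (hσ : ∀ x, σ x ≠ 0) (hG : Integrable (invDensKernel σ S)) :
    0 < ∫ y, invDensKernel σ S y := by
  rw [integral_pos_iff_support_of_nonneg (fun y => (invDensKernel_pos (hσ y)).le) hG,
    Function.support_eq_univ fun y => (invDensKernel_pos (hσ y)).ne']
  simp

lemma continuous_invDens (hσc : Continuous σ) (hσ : ∀ x, σ x ≠ 0) (hS : Continuous S) :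
    Continuous (invDens σ S) := by
  have hprim := continuous_primitive (μ := volume)
    (fun a b => (hS.div (hσc.pow 2) fun x => pow_ne_zero 2 (hσ x)).intervalIntegrable a b) 0
  unfold invDens invDensKernel
  exact continuous_const.mul (((hσc.pow 2).inv₀ fun x => pow_ne_zero 2 (hσ x)).mul
    (continuous_exp.comp (continuous_const.mul hprim)))

lemma invDens_nonneg (hσ : ∀ x, σ x ≠ 0) (y : ℝ) : 0 ≤ invDens σ S y :=
  mul_nonneg (inv_nonneg.2 (integral_nonneg fun z => (invDensKernel_pos (hσ z)).le))
    (invDensKernel_pos (hσ y)).le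

lemma integral_invDens (hG : ∫ y, invDensKernel σ S y ≠ 0) : ∫ y, invDens σ S y = 1 := by
  simp only [invDens, MeasureTheory.integral_const_mul, inv_mul_cancel₀ hG]

lemma invDensKernel_add_mul_mul_sq {ψ : ℝ → ℝ} {y : ℝ} (hσ : ∀ x, σ x ≠ 0)
    (hS : IntervalIntegrable (fun v => S v / σ v ^ 2) volume 0 y)
    (hψ : IntervalIntegrable ψ volume 0 y) (ε : ℝ) :
    invDensKernel σ (fun v => S v + ε * ψ v * σ v ^ 2) y
      = exp (ε * (2 * ∫ v in (0:ℝ)..y, ψ v)) * invDensKernel σ S y := by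
  have hdiv : ∀ v, (S v + ε * ψ v * σ v ^ 2) / σ v ^ 2 = S v / σ v ^ 2 + ε * ψ v := fun v => by
    field_simp [hσ v]
  simp only [invDensKernel, hdiv, integral_add hS (hψ.const_mul ε),
    intervalIntegral.integral_const_mul, mul_add, exp_add]
  ring_nf

section Reweighting

variable {S' w : ℝ → ℝ} (hk : ∀ y, invDensKernel σ S' y = w y * invDensKernel σ S y)
  (hG : ∫ y, invDensKernel σ S y ≠ 0)
include hk hG

lemma invDens_eq_of_invDensKernel_eq_mul (x : ℝ) :
    invDens σ S' x = (∫ z, w z * invDens σ S z)⁻¹ * (w x * invDens σ S x) := by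
  have hw : ∫ z, w z * invDens σ S z
      = (∫ y, invDensKernel σ S y)⁻¹ * ∫ z, invDensKernel σ S' z := by
    rw [← MeasureTheory.integral_const_mul]
    congr 1 with z
    rw [invDens, hk]
    ring
  rw [hw, invDens, invDens, hk]
  field_simp

lemma integral_mul_invDens_eq_of_invDensKernel_eq_mul (F : ℝ → ℝ) :
    ∫ x, F x * invDens σ S' x
      = (∫ x, w x * (F x * invDens σ S x)) / ∫ x, w x * invDens σ S x := by
  rw [div_eq_inv_mul, ← MeasureTheory.integral_const_mul]
  congr 1 with x
  rw [invDens_eq_of_invDensKernel_eq_mul hk hG]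
  ring

lemma integrable_mul_invDens_of_invDensKernel_eq_mul {H : ℝ → ℝ}
    (hH : Integrable (fun x => w x * (H x * invDens σ S x))) :
    Integrable (fun x => H x * invDens σ S' x) := by
  simp only [invDens_eq_of_invDensKernel_eq_mul hk hG]
  convert hH.const_mul (∫ z, w z * invDens σ S z)⁻¹ using 2 with x
  ring

end Reweighting

end InvariantDensity

theorem moment_estimation_stmt7
    (σ Sstar : ℝ → ℝ)
    (hσc : Continuous σ) (hσpos : ∀ x, 0 < σ x)
    (hSc : Continuous Sstar)
    (hGfin : Integrable (invDensKernel σ Sstar))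
    (F : ℝ → ℝ) (hFm : Measurable F)
    (hFint : Integrable (fun x => |F x| * invDens σ Sstar x))
    (ϑstar : ℝ) (hϑ : ϑstar = ∫ x : ℝ, F x * invDens σ Sstar x)
    (ψ : ℝ → ℝ) (hψc : Continuous ψ) (hψs : HasCompactSupport ψ) :
    ∃ ε₀ > (0:ℝ),
      (∀ ε : ℝ, |ε| < ε₀ →
        Integrable (invDensKernel σ (fun v => Sstar v + ε * ψ v * (σ v) ^ 2)) ∧
        Integrable (fun x =>
          |F x| * invDens σ (fun v => Sstar v + ε * ψ v * (σ v) ^ 2) x)) ∧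
      HasDerivAt
        (fun ε : ℝ => ∫ x : ℝ, F x * invDens σ (fun v => Sstar v + ε * ψ v * (σ v) ^ 2) x)
        (2 * ((∫ x : ℝ, F x * (∫ v in (0:ℝ)..x, ψ v) * invDens σ Sstar x)
          - ϑstar * ∫ x : ℝ, (∫ v in (0:ℝ)..x, ψ v) * invDens σ Sstar x))
        0 := by
  set Ψ : ℝ → ℝ := fun x => ∫ v in (0:ℝ)..x, ψ v
  have hσ : ∀ x, σ x ≠ 0 := fun x => (hσpos x).ne'
  have hΨm : AEStronglyMeasurable (fun x => 2 * Ψ x) :=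
    (continuous_const.mul (continuous_primitive (μ := volume)
      (fun a b => hψc.intervalIntegrable a b) 0)).aestronglyMeasurable
  have hΨC : ∀ᵐ x, |2 * Ψ x| ≤ 2 * ∫ v, |ψ v| := ae_of_all _ fun x => by
    rw [abs_mul, abs_two]
    gcongr
    exact abs_intervalIntegral_le_integral_abs (hψc.integrable_of_hasCompactSupport hψs) 0 x
  have hk : ∀ ε y, invDensKernel σ (fun v => Sstar v + ε * ψ v * σ v ^ 2) y
      = exp (ε * (2 * Ψ y)) * invDensKernel σ Sstar y := fun ε y =>
    invDensKernel_add_mul_mul_sq hσ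
      ((hSc.div (hσc.pow 2) fun x => pow_ne_zero 2 (hσ x)).intervalIntegrable 0 y)
      (hψc.intervalIntegrable 0 y) ε
  have hG := (integral_invDensKernel_pos hσ hGfin).ne'
  have hFf : Integrable (fun x => F x * invDens σ Sstar x) :=
    hFint.mono' (hFm.aestronglyMeasurable.mul (continuous_invDens hσc hσ hSc).aestronglyMeasurable)
      (ae_of_all _ fun x => by
        rw [norm_mul, Real.norm_eq_abs, Real.norm_of_nonneg (invDens_nonneg hσ x)])
  refine ⟨1, one_pos, fun ε _ => ⟨?_, ?_⟩, ?_⟩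
  · rw [funext (hk ε)]
    exact hGfin.exp_mul_mul hΨm hΨC ε
  · exact integrable_mul_invDens_of_invDensKernel_eq_mul (hk ε) hG
      (hFint.exp_mul_mul hΨm hΨC ε)
  · simp only [integral_mul_invDens_eq_of_invDensKernel_eq_mul (hk _) hG]
    convert hasDerivAt_tilted_mean (f := invDens σ Sstar) (hGfin.const_mul _)
      (integral_invDens hG) hFf hΨm hΨC using 1
    have hcov : ∫ x, 2 * Ψ x * (F x * invDens σ Sstar x)
        = 2 * ∫ x, F x * Ψ x * invDens σ Sstar x := by
      rw [← MeasureTheory.integral_const_mul]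
      congr 1 with x
      ring
    have hmass : ∫ x, 2 * Ψ x * invDens σ Sstar x = 2 * ∫ x, Ψ x * invDens σ Sstar x := by
      simp only [mul_assoc, MeasureTheory.integral_const_mul]
    rw [hcov, hmass, ← hϑ]
    ring

end
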